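/- Let M = (S, A, P) be an MDP with countable state set, π a stationary policy, F ⊆ S a target set, and s ∈ S. For every horizon T ∈ ℕ, the recursively defined bounded-horizon reachability probability equals the path-measure probability of reaching F within T steps: ℙ^s_{M,π}(◇_{≤T} F) = ℙ^s_{M,π}({ω ∈ S^ℕ : ∃ t ≤ T, ω_t ∈ F}), where the right-hand side is the measure, under the Markov path measure induced by π and P from initial state s, of the set of infinite state sequences visiting F within the first T steps. -/

import Mathlib

open scoped Classical ENNReal
open MeasureTheory

structure MDP (S A : Type*) where
  P : S → A → PMF S

/-- The Markov transition kernel `Q(s,s') = ∑_{a} π(s,a) P(s,a,s')` induced by a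
stationary policy. -/
noncomputable def stepKernel {S A : Type*} (M : MDP S A) (π : S → PMF A) (s s' : S) :
    ℝ≥0∞ :=
  ∑' a, π s a * M.P s a s'

/-- The cylinder set of a finite path fragment, given as a list of states: all infinite
state sequences whose initial entries agree with the list. -/
def listCyl {S : Type*} (l : List S) : Set (ℕ → S) :=
  {ω | ∀ t x, l[t]? = some x → ω t = x}

/-- The probability weight `∏_{i<m} Q(s_i, s_{i+1})` of a finite path fragment. -/
noncomputable def listWeight {S : Type*} (Q : S → S → ℝ≥0∞) : List S → ℝ≥0∞
  | [] => 1
  | [_] => 1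
  | s :: s' :: rest => Q s s' * listWeight Q (s' :: rest)

/-- The set `Γ` of finite path fragments of positive probability from `s0` whose final
state is the first state belonging to `G`. -/
def firstVisitFrags {S : Type*} (Q : S → S → ℝ≥0∞) (s0 : S) (G : Set S) :
    Set (List S) :=
  {l | l.head? = some s0 ∧ l.Chain' (fun s s' => 0 < Q s s') ∧
    (∃ x, l.getLast? = some x ∧ x ∈ G) ∧
    (∀ t x, l[t]? = some x → t + 1 < l.length → x ∉ G)}

/-- The reward process `R_c`: reward `1` at the first time `t ≤ T` at which the state
belongs to `F`, and `0` at all other times. -/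
noncomputable def firstRewards {S : Type*} (F : Set S) (T : ℕ) (ω : ℕ → S) (t : ℕ) :
    ℝ≥0∞ :=
  if t ≤ T ∧ ω t ∈ F ∧ ∀ i < t, ω i ∉ F then 1 else 0

/-- Bounded-horizon reachability probability `ℙ^s_{M,π}(◇_{≤T} F)`, defined recursively. -/
noncomputable def reachProb {S A : Type*} (M : MDP S A) (π : S → PMF A) (F : Set S) :
    ℕ → S → ℝ≥0∞
  | 0, s => if s ∈ F then 1 else 0
  | T + 1, s =>
      if s ∈ F then 1 else ∑' a, π s a * ∑' s', M.P s a s' * reachProb M π F T s'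

/-! Extend a path prefix ending in `u` by one state at a time. If `u ∈ F`, its cylinder already
lies in the event of visiting `F`; otherwise the event splits into the disjoint cylinders of the
one-step extensions `u → v`, whose weights gain the factor `stepKernel M π u v`. Hence the
measure of "cylinder of the prefix, then a visit to `F` within `k` steps" is the prefix weight
times the solution of the recursion defining `reachProb`. As `ν` is concentrated on paths
starting at `s`, the prefix `[s]` gives the theorem. -/

section

variable {S A : Type*}

theorem reachProb_of_mem (M : MDP S A) (π : S → PMF A) {F : Set S} (k : ℕ) {s : S}
    (hs : s ∈ F) : reachProb M π F k s = 1 := by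
  cases k <;> simp [reachProb, hs]

theorem reachProb_succ_of_notMem (M : MDP S A) (π : S → PMF A) {F : Set S} (k : ℕ) {s : S}
    (hs : s ∉ F) :
    reachProb M π F (k + 1) s = ∑' s', stepKernel M π s s' * reachProb M π F k s' := by
  simp only [reachProb, if_neg hs, stepKernel, ← ENNReal.tsum_mul_right,
    ← ENNReal.tsum_mul_left]
  rw [ENNReal.tsum_comm]
  exact tsum_congr fun s' => tsum_congr fun a => (mul_assoc _ _ _).symm

theorem listWeight_append_pair (Q : S → S → ℝ≥0∞) (l : List S) (u v : S) :
    listWeight Q (l ++ [u, v]) = listWeight Q (l ++ [u]) * Q u v := by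
  induction l with
  | nil => simp [listWeight]
  | cons a l ih =>
    cases l with
    | nil => simp [listWeight]
    | cons b l =>
      simp only [List.cons_append, listWeight] at ih ⊢
      rw [ih, mul_assoc]

theorem listCyl_append_singleton (l : List S) (v : S) :
    listCyl (l ++ [v]) = listCyl l ∩ {ω | ω l.length = v} := by
  ext ω
  simp only [listCyl, Set.mem_inter_iff, Set.mem_ofPred_eq]
  constructor
  · intro h
    refine ⟨fun t x hx => h t x ?_, h _ _ (by simp)⟩
    rwa [List.getElem?_append_left (List.getElem?_eq_some_iff.1 hx).1]
  · rintro ⟨h, hv⟩ t x hx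
    rcases lt_trichotomy t l.length with ht | rfl | ht
    · exact h t x (by rwa [List.getElem?_append_left ht] at hx)
    · simp_all
    · simp [ht.not_ge] at hx

theorem listCyl_eq_iInter (l : List S) :
    listCyl l = ⋂ i : Fin l.length, {ω | ω i = l[i]} := by
  ext ω
  simp only [listCyl, List.getElem?_eq_some_iff, Set.mem_iInter, Set.mem_ofPred_eq]
  exact ⟨fun h i => h i _ ⟨i.2, rfl⟩, fun h t x ⟨ht, hx⟩ => hx ▸ h ⟨t, ht⟩⟩

theorem measurableSet_listCyl [MeasurableSpace S] [MeasurableSingletonClass S] (l : List S) :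
    MeasurableSet (listCyl l) := by
  rw [listCyl_eq_iInter]
  exact .iInter fun i => measurable_pi_apply _ (measurableSet_singleton _)

theorem pairwise_disjoint_listCyl_append_singleton (l : List S) :
    Pairwise fun v w => Disjoint (listCyl (l ++ [v])) (listCyl (l ++ [w])) := by
  intro v w hvw
  simp only [listCyl_append_singleton]
  exact Set.disjoint_left.2 fun ω hv hw => hvw (hv.2.symm.trans hw.2)

def visitsWithin (F : Set S) (n k : ℕ) : Set (ℕ → S) :=
  {ω | ∃ t ≤ k, ω (n + t) ∈ F}

theorem measurableSet_visitsWithin [MeasurableSpace S] {F : Set S} (hF : MeasurableSet F)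
    (n k : ℕ) : MeasurableSet (visitsWithin F n k) := by
  have h : visitsWithin F n k = ⋃ (t) (_ : t ≤ k), (fun ω : ℕ → S => ω (n + t)) ⁻¹' F := by
    ext ω
    simp [visitsWithin]
  rw [h]
  exact .iUnion fun t => .iUnion fun _ => measurable_pi_apply _ hF

section VisitsAfterPrefix

variable {F : Set S} {l : List S} {u : S}

theorem listCyl_inter_visitsWithin_of_mem (hu : u ∈ F) (k : ℕ) :
    listCyl (l ++ [u]) ∩ visitsWithin F l.length k = listCyl (l ++ [u]) := by
  refine Set.inter_eq_left.2 fun ω hω => ⟨0, k.zero_le, ?_⟩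
  rw [listCyl_append_singleton] at hω
  show ω (l.length + 0) ∈ F
  rwa [add_zero, hω.2]

theorem listCyl_inter_visitsWithin_zero_of_notMem (hu : u ∉ F) :
    listCyl (l ++ [u]) ∩ visitsWithin F l.length 0 = ∅ := by
  refine Set.eq_empty_iff_forall_notMem.2 ?_
  rw [listCyl_append_singleton]
  rintro ω ⟨⟨-, hωu⟩, t, ht, htF⟩
  obtain rfl : t = 0 := Nat.le_zero.1 ht
  exact hu (hωu ▸ htF)

theorem listCyl_inter_visitsWithin_succ_of_notMem (hu : u ∉ F) (k : ℕ) :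
    listCyl (l ++ [u]) ∩ visitsWithin F l.length (k + 1) =
      ⋃ v, listCyl (l ++ [u] ++ [v]) ∩ visitsWithin F (l ++ [u]).length k := by
  ext ω
  simp only [listCyl_append_singleton, visitsWithin, Set.mem_iUnion, Set.mem_inter_iff,
    Set.mem_ofPred_eq, List.length_append, List.length_singleton]
  constructor
  · rintro ⟨⟨hl, hωu⟩, t, ht, htF⟩
    obtain _ | t := t
    · exact absurd (hωu ▸ htF) hu
    · exact ⟨_, ⟨⟨hl, hωu⟩, rfl⟩, t, by omega, by rwa [add_right_comm, add_assoc]⟩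
  · rintro ⟨v, ⟨⟨hl, hωu⟩, -⟩, t, ht, htF⟩
    exact ⟨⟨hl, hωu⟩, t + 1, by omega, by rwa [add_right_comm, add_assoc] at htF⟩

end VisitsAfterPrefix

theorem measure_listCyl_inter_visitsWithin [Countable S] [MeasurableSpace S]
    [MeasurableSingletonClass S] (M : MDP S A) (π : S → PMF A) {F : Set S}
    (hF : MeasurableSet F) {s : S} {ν : Measure (ℕ → S)}
    (hcyl : ∀ l : List S, l.head? = some s → ν (listCyl l) = listWeight (stepKernel M π) l)
    (k : ℕ) (l : List S) (u : S) (hl : (l ++ [u]).head? = some s) :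
    ν (listCyl (l ++ [u]) ∩ visitsWithin F l.length k) =
      listWeight (stepKernel M π) (l ++ [u]) * reachProb M π F k u := by
  have of_mem : ∀ k l u, (l ++ [u]).head? = some s → u ∈ F →
      ν (listCyl (l ++ [u]) ∩ visitsWithin F l.length k) =
        listWeight (stepKernel M π) (l ++ [u]) * reachProb M π F k u := fun k l u hl hu => by
    rw [listCyl_inter_visitsWithin_of_mem hu, hcyl _ hl, reachProb_of_mem _ _ _ hu, mul_one]
  induction k generalizing l u with
  | zero =>
    by_cases hu : u ∈ F
    · exact of_mem 0 l u hl hu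
    rw [listCyl_inter_visitsWithin_zero_of_notMem hu, measure_empty, reachProb, if_neg hu,
      mul_zero]
  | succ k ih =>
    by_cases hu : u ∈ F
    · exact of_mem (k + 1) l u hl hu
    have hdisj := pairwise_disjoint_listCyl_append_singleton (l ++ [u])
    rw [listCyl_inter_visitsWithin_succ_of_notMem hu, reachProb_succ_of_notMem _ _ _ hu,
      measure_iUnion (fun v w hvw => (hdisj hvw).mono Set.inter_subset_left Set.inter_subset_left)
        (fun v => (measurableSet_listCyl _).inter (measurableSet_visitsWithin hF _ _)),
      ← ENNReal.tsum_mul_left]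
    refine tsum_congr fun v => ?_
    have hl' : (l ++ [u] ++ [v]).head? = some s := by
      rw [List.head?_append, hl]; rfl
    rw [ih _ _ hl', List.append_assoc, List.singleton_append, listWeight_append_pair, mul_assoc]

end

/-- Let `M = (S, A, P)` be an MDP with countable state set, `π` a
stationary policy, `F ⊆ S` a target set, and `s ∈ S`.  For every horizon `T ∈ ℕ`, the
recursively defined bounded-horizon reachability probability equals the path-measure
probability of reaching `F` within `T` steps:
`ℙ^s_{M,π}(◇_{≤T} F) = ℙ^s_{M,π}({ω ∈ S^ℕ : ∃ t ≤ T, ω_t ∈ F})`, where the right-hand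
side is the measure, under the Markov path measure induced by `π` and `P` from `s`
(characterized by `ν(Cyl(s_0…s_m)) = ∏_{i<m} Q(s_i, s_{i+1})` for fragments starting
at `s`), of the set of infinite state sequences visiting `F` within the first `T`
steps. -/
theorem reachProb_eq_measure_bounded {S A : Type*} [Countable S] [MeasurableSpace S]
    [MeasurableSingletonClass S]
    (M : MDP S A) (π : S → PMF A) (F : Set S) (s : S) (T : ℕ)
    (ν : MeasureTheory.Measure (ℕ → S)) [MeasureTheory.IsProbabilityMeasure ν]
    (hcyl : ∀ l : List S, l.head? = some s →
      ν (listCyl l) = listWeight (stepKernel M π) l) :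
    reachProb M π F T s = ν {ω : ℕ → S | ∃ t ≤ T, ω t ∈ F} := by
  have hstart : ν (listCyl [s])ᶜ = 0 :=
    (prob_compl_eq_zero_iff (measurableSet_listCyl _)).2 (hcyl [s] rfl)
  calc reachProb M π F T s
      = listWeight (stepKernel M π) ([] ++ [s]) * reachProb M π F T s := (one_mul _).symm
    _ = ν (listCyl ([] ++ [s]) ∩ visitsWithin F 0 T) :=
      (measure_listCyl_inter_visitsWithin M π .of_discrete hcyl T [] s rfl).symm
    _ = ν (visitsWithin F 0 T) := by rw [Set.inter_comm]; exact measure_inter_conull hstart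
    _ = ν {ω : ℕ → S | ∃ t ≤ T, ω t ∈ F} := by simp only [visitsWithin, zero_add]
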